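/- arXiv:2605.00336 — 3 statements merged into one kernel-verified Lean document; each statement's English description precedes it below -/
import Mathlib

section
/- Let Φ be a real n × d matrix, let η > 0, set K = Φ Φᵀ, and define D : Finset (Fin n) → ℝ by D(S) = log det(I + η K_S), where K_S is the principal submatrix of K indexed by S (with D(∅) = 0). Then for every S ⊆ Fin n and every e ∉ S, the marginal gain satisfies D(S ∪ {e}) − D(S) = log(1 + η φ_eᵀ M_S⁻¹ φ_e), where φ_e ∈ ℝ^d is row e of Φ and M_S = I + η Φ_Sᵀ Φ_S. -/
open Matrix

/-- The submatrix of `Φ` consisting of the rows indexed by `S`. -/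
def rowSub {n d : ℕ} (Φ : Matrix (Fin n) (Fin d) ℝ) (S : Finset (Fin n)) :
    Matrix {x // x ∈ S} (Fin d) ℝ :=
  Φ.submatrix (fun i => (i : Fin n)) id

/-- `M_S = I + η Φ_Sᵀ Φ_S`. -/
noncomputable def Mmat {n d : ℕ} (Φ : Matrix (Fin n) (Fin d) ℝ) (η : ℝ)
    (S : Finset (Fin n)) : Matrix (Fin d) (Fin d) ℝ :=
  1 + η • ((rowSub Φ S)ᵀ * rowSub Φ S)

/-- The principal submatrix `K_S` of `K` indexed by `S`. -/
def prinSub {n : ℕ} (K : Matrix (Fin n) (Fin n) ℝ) (S : Finset (Fin n)) :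
    Matrix {x // x ∈ S} {x // x ∈ S} ℝ :=
  K.submatrix (fun i => (i : Fin n)) (fun j => (j : Fin n))

/-- Log-determinant diversity `D(S) = log det (I + η K_S)` (so `D(∅) = 0`). -/
noncomputable def Dlog {n : ℕ} (K : Matrix (Fin n) (Fin n) ℝ) (η : ℝ)
    (S : Finset (Fin n)) : ℝ :=
  Real.log (1 + η • prinSub K S).det

/-! Sylvester's identity `det (1 + η X Xᵀ) = det (1 + η Xᵀ X)` turns `D(S)` into `log det M_S`,
and adding `e` to `S` is the rank-one update `M_{S ∪ {e}} = M_S + η φ_e φ_eᵀ`. The matrix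
determinant lemma then gives `det M_{S ∪ {e}} = det M_S · (1 + η φ_eᵀ M_S⁻¹ φ_e)`, and both
factors are positive because `M_S` is positive definite. -/

theorem Matrix.det_add_replicateCol_mul_replicateRow_eq_det_mul {m α : Type*} [Fintype m]
    [DecidableEq m] [CommRing α] {A : Matrix m m α} (hA : IsUnit A.det) (u v : m → α) :
    (A + replicateCol Unit u * replicateRow Unit v).det = A.det * (1 + v ⬝ᵥ (A⁻¹ *ᵥ u)) := by
  rw [det_add_replicateCol_mul_replicateRow hA, Matrix.mul_assoc, ← replicateCol_mulVec,
    replicateRow_mul_replicateCol]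
  congr 1
  exact det_unique _

theorem prinSub_mul_transpose {n d : ℕ} (Φ : Matrix (Fin n) (Fin d) ℝ) (S : Finset (Fin n)) :
    prinSub (Φ * Φᵀ) S = rowSub Φ S * (rowSub Φ S)ᵀ := by
  ext i j
  simp [prinSub, rowSub, mul_apply]

theorem Dlog_mul_transpose {n d : ℕ} (Φ : Matrix (Fin n) (Fin d) ℝ) (η : ℝ)
    (S : Finset (Fin n)) : Dlog (Φ * Φᵀ) η S = Real.log (Mmat Φ η S).det := by
  rw [Dlog, prinSub_mul_transpose, ← Matrix.smul_mul, det_one_add_mul_comm, Matrix.mul_smul,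
    Mmat]

theorem Mmat_posDef {n d : ℕ} (Φ : Matrix (Fin n) (Fin d) ℝ) {η : ℝ} (hη : 0 ≤ η)
    (S : Finset (Fin n)) : (Mmat Φ η S).PosDef := by
  have hgram : ((rowSub Φ S)ᵀ * rowSub Φ S).PosSemidef := by
    simpa using posSemidef_conjTranspose_mul_self (rowSub Φ S)
  exact PosDef.one.add_posSemidef (hgram.smul hη)

theorem transpose_mul_rowSub_insert {n d : ℕ} (Φ : Matrix (Fin n) (Fin d) ℝ)
    {S : Finset (Fin n)} {e : Fin n} (he : e ∉ S) :
    (rowSub Φ (insert e S))ᵀ * rowSub Φ (insert e S) =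
      (rowSub Φ S)ᵀ * rowSub Φ S + replicateCol Unit (Φ e) * replicateRow Unit (Φ e) := by
  ext i j
  simp only [Matrix.add_apply, mul_apply, rowSub, transpose_apply, submatrix_apply, id,
    replicateCol_apply, replicateRow_apply, Fintype.sum_unique]
  rw [Finset.sum_coe_sort (insert e S) (fun k => Φ k i * Φ k j),
    Finset.sum_coe_sort S (fun k => Φ k i * Φ k j), Finset.sum_insert he, add_comm]

theorem Mmat_insert {n d : ℕ} (Φ : Matrix (Fin n) (Fin d) ℝ) (η : ℝ)
    {S : Finset (Fin n)} {e : Fin n} (he : e ∉ S) :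
    Mmat Φ η (insert e S) =
      Mmat Φ η S + replicateCol Unit (η • Φ e) * replicateRow Unit (Φ e) := by
  rw [Mmat, Mmat, transpose_mul_rowSub_insert Φ he, replicateCol_smul, Matrix.smul_mul,
    smul_add, add_assoc]

theorem det_Mmat_insert {n d : ℕ} (Φ : Matrix (Fin n) (Fin d) ℝ) {η : ℝ} (hη : 0 ≤ η)
    {S : Finset (Fin n)} {e : Fin n} (he : e ∉ S) :
    (Mmat Φ η (insert e S)).det =
      (Mmat Φ η S).det * (1 + η * (Φ e ⬝ᵥ ((Mmat Φ η S)⁻¹ *ᵥ Φ e))) := by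
  rw [Mmat_insert Φ η he,
    det_add_replicateCol_mul_replicateRow_eq_det_mul (Mmat_posDef Φ hη S).det_pos.ne'.isUnit,
    mulVec_smul, dotProduct_smul, smul_eq_mul]

/-- with `K = Φ Φᵀ`, the marginal gain of the log-determinant diversity is
`D(S ∪ {e}) − D(S) = log (1 + η φ_eᵀ M_S⁻¹ φ_e)`. -/
theorem Dlog_marginal_gain {n d : ℕ} (Φ : Matrix (Fin n) (Fin d) ℝ) (η : ℝ)
    (hη : 0 < η) (S : Finset (Fin n)) (e : Fin n) (he : e ∉ S) :
    Dlog (Φ * Φᵀ) η (insert e S) - Dlog (Φ * Φᵀ) η S =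
      Real.log (1 + η * (Φ e ⬝ᵥ ((Mmat Φ η S)⁻¹ *ᵥ Φ e))) := by
  have hM := Mmat_posDef Φ hη.le S
  have hquad : 0 ≤ Φ e ⬝ᵥ ((Mmat Φ η S)⁻¹ *ᵥ Φ e) := by
    simpa using hM.inv.posSemidef.dotProduct_mulVec_nonneg (Φ e)
  have hgain : 0 < 1 + η * (Φ e ⬝ᵥ ((Mmat Φ η S)⁻¹ *ᵥ Φ e)) := by positivity
  rw [Dlog_mul_transpose, Dlog_mul_transpose, det_Mmat_insert Φ hη.le he,
    Real.log_mul hM.det_pos.ne' hgain.ne', add_sub_cancel_left]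
end

section
/- Let K be a real n × n positive semidefinite matrix and let η > 0. Define D : Finset (Fin n) → ℝ by D(S) = log det(I + η K_S), where K_S is the principal submatrix of K indexed by S (with D(∅) = 0). Then D is monotone: for all S ⊆ Fin n and e ∉ S, D(S ∪ {e}) ≥ D(S), and more generally D(A) ≤ D(B) whenever A ⊆ B. -/
open Matrix

/-!
For a positive semidefinite `M = [[P, B], [Bᴴ, D]]`, the Schur complement formula gives
`det (1 + M) = det (1 + P) * det (1 + S)` with `S = D - Bᴴ (1 + P)⁻¹ B`. Now `S` is itself
positive semidefinite, being the Schur complement of `1 + P` in `M + (1 ⊕ 0)`, so all eigenvalues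
of `1 + S` are at least `1` and `det (1 + S) ≥ 1`. Hence `det (1 + P) ≤ det (1 + M)`: applied to
`M = η K_B` and its principal block `P = η K_A`, this is the monotonicity of `log det (1 + η K_S)`.
-/

namespace Matrix.PosSemidef

variable {m : Type*} [Fintype m] [DecidableEq m]

theorem one_le_det_one_add {Q : Matrix m m ℝ} (hQ : Q.PosSemidef) : 1 ≤ (1 + Q).det := by
  have hH : (1 + Q).IsHermitian := isHermitian_one.add hQ.1
  rw [hH.det_eq_prod_eigenvalues]
  refine Finset.one_le_prod fun i _ => ?_
  have hunit : star ⇑(hH.eigenvectorBasis i) ⬝ᵥ ⇑(hH.eigenvectorBasis i) = 1 := by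
    rw [dotProduct_comm, ← EuclideanSpace.inner_eq_star_dotProduct]
    simp
  rw [RCLike.ofReal_real_eq_id, id, hH.eigenvalues_eq, add_mulVec, one_mulVec, dotProduct_add,
    hunit]
  simpa using hQ.re_dotProduct_nonneg _

theorem det_one_add_toBlocks₁₁_le {l : Type*} [Fintype l] [DecidableEq l]
    {M : Matrix (l ⊕ m) (l ⊕ m) ℝ} (hM : M.PosSemidef) :
    (1 + M.toBlocks₁₁).det ≤ (1 + M).det := by
  obtain ⟨P, B, C, D, rfl⟩ : ∃ P B C D, M = fromBlocks P B C D :=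
    ⟨_, _, _, _, (fromBlocks_toBlocks M).symm⟩
  obtain ⟨-, rfl, -, -⟩ := isHermitian_fromBlocks_iff.mp hM.1
  have hP : (1 + P).PosDef := PosDef.one.add_posSemidef (hM.submatrix Sum.inl)
  let := hP.isUnit.invertible
  have hsum : 1 + fromBlocks P B Bᴴ D = fromBlocks (1 + P) B Bᴴ (1 + D) := by
    rw [← fromBlocks_one, fromBlocks_add, zero_add, zero_add]
  have hSchur : (D - Bᴴ * (1 + P)⁻¹ * B).PosSemidef := by
    refine (PosDef.fromBlocks₁₁ B D hP).mp ?_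
    have hone_zero : (fromBlocks 1 0 0 0 : Matrix (l ⊕ m) (l ⊕ m) ℝ).PosSemidef := by
      rw [← diagonal_one, ← diagonal_zero, fromBlocks_diagonal]
      exact PosSemidef.diagonal (by rintro (i | i) <;> simp)
    simpa [fromBlocks_add] using hone_zero.add hM
  rw [toBlocks_fromBlocks₁₁, hsum, det_fromBlocks₁₁, invOf_eq_nonsing_inv, add_sub_assoc]
  exact le_mul_of_one_le_right hP.det_pos.le hSchur.one_le_det_one_add

theorem det_one_add_submatrix_le {l : Type*} [Fintype l] [DecidableEq l]
    {M : Matrix m m ℝ} (hM : M.PosSemidef) {f : l → m} (hf : Function.Injective f) :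
    (1 + M.submatrix f f).det ≤ (1 + M).det := by
  classical
  let e : l ⊕ ↥(Set.range f)ᶜ ≃ m :=
    (Equiv.sumCongr (Equiv.ofInjective f hf) (Equiv.refl _)).trans
      (Equiv.Set.sumCompl (Set.range f))
  have hblock : (M.submatrix e e).toBlocks₁₁ = M.submatrix f f := rfl
  calc (1 + M.submatrix f f).det
      ≤ (1 + M.submatrix e e).det := hblock ▸ (hM.submatrix e).det_one_add_toBlocks₁₁_le
    _ = (1 + M).det := by
      rw [← submatrix_one_equiv e]
      exact det_submatrix_equiv_self e (1 + M)

end Matrix.PosSemidef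

theorem monotone_Dlog {n : ℕ} {K : Matrix (Fin n) (Fin n) ℝ} (hK : K.PosSemidef) {η : ℝ}
    (hη : 0 ≤ η) : Monotone (Dlog K η) := by
  intro A B hAB
  have hA : (η • prinSub K A).PosSemidef := (hK.submatrix _).smul hη
  have hB : (η • prinSub K B).PosSemidef := (hK.submatrix _).smul hη
  refine Real.log_le_log (PosDef.one.add_posSemidef hA).det_pos ?_
  have hinc : Function.Injective fun i : A => (⟨i, hAB i.2⟩ : B) :=
    fun i j hij => Subtype.ext (congrArg (fun x : B => (x : Fin n)) hij)
  exact hB.det_one_add_submatrix_le hinc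

/-- for positive semidefinite `K` and `η > 0`, the log-determinant
diversity is monotone: adding an element never decreases it, and more generally
`D(A) ≤ D(B)` whenever `A ⊆ B`. -/
theorem Dlog_monotone {n : ℕ} (K : Matrix (Fin n) (Fin n) ℝ)
    (hK : K.PosSemidef) (η : ℝ) (hη : 0 < η) :
    (∀ S : Finset (Fin n), ∀ e : Fin n, e ∉ S →
      Dlog K η S ≤ Dlog K η (insert e S)) ∧
    (∀ A B : Finset (Fin n), A ⊆ B → Dlog K η A ≤ Dlog K η B) :=
  ⟨fun S e _ => monotone_Dlog hK hη.le (Finset.subset_insert e S),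
    fun _ _ hAB => monotone_Dlog hK hη.le hAB⟩
end

section
/- Let K be a real n × n positive semidefinite matrix and let η > 0. Define D : Finset (Fin n) → ℝ by D(S) = log det(I + η K_S), where K_S is the principal submatrix of K indexed by S (with D(∅) = 0). Then D is monotone and submodular. -/
open Matrix

/-!
Write `K = V Vᵀ` with rows `vᵢ` of `V`. By Sylvester's determinant identity,
`det (I + η K_S) = det (I + η ∑_{i ∈ S} vᵢ vᵢᵀ)`, and by the matrix determinant lemma adding `e`
to `S` multiplies this determinant by `1 + η vₑᵀ (I + η ∑_{i ∈ S} vᵢ vᵢᵀ)⁻¹ vₑ ≥ 1`. The matrix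
inside the inverse grows with `S` in the Loewner order, so the factor shrinks: the marginal gains
of `D` are nonnegative and decreasing.
-/

open Finset
open scoped MatrixOrder

namespace Matrix

variable {m : Type*} [Fintype m] [DecidableEq m]

theorem det_add_vecMulVec {R : Type*} [CommRing R] {A : Matrix m m R} (hA : IsUnit A.det)
    (u v : m → R) : (A + vecMulVec u v).det = A.det * (1 + v ⬝ᵥ A⁻¹ *ᵥ u) := by
  rw [vecMulVec_eq Unit, det_add_replicateCol_mul_replicateRow hA, Matrix.mul_assoc,
    ← replicateCol_mulVec, det_unique (1 + _ : Matrix Unit Unit R), add_apply, one_apply_eq,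
    replicateRow_mul_replicateCol_apply]

/-- Completing the square: `xᵀ M⁻¹ x = max_y (2 yᵀx - yᵀ M y)`, attained at `y = M⁻¹ x`. -/
theorem PosDef.two_mul_dotProduct_sub_le {M : Matrix m m ℝ} (hM : M.PosDef) (x y : m → ℝ) :
    2 * (y ⬝ᵥ x) - y ⬝ᵥ M *ᵥ y ≤ x ⬝ᵥ M⁻¹ *ᵥ x := by
  set z := M⁻¹ *ᵥ x
  have hz : M *ᵥ z = x := by
    rw [mulVec_mulVec, mul_nonsing_inv _ ((isUnit_iff_isUnit_det M).mp hM.isUnit), one_mulVec]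
  have hMt : Mᵀ = M := by simpa using hM.isHermitian.eq
  have hsymm : z ⬝ᵥ M *ᵥ y = y ⬝ᵥ x := by
    rw [dotProduct_mulVec, ← mulVec_transpose, hMt, hz, dotProduct_comm]
  have hsq := hM.posSemidef.dotProduct_mulVec_nonneg (y - z)
  simp only [star_trivial, mulVec_sub, dotProduct_sub, sub_dotProduct, hz, hsymm] at hsq
  linarith [dotProduct_comm x z]

theorem PosDef.dotProduct_inv_mulVec_le_of_le {M N : Matrix m m ℝ} (hM : M.PosDef) (hMN : M ≤ N)
    (x : m → ℝ) : x ⬝ᵥ N⁻¹ *ᵥ x ≤ x ⬝ᵥ M⁻¹ *ᵥ x := by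
  have hN : N.PosDef := by simpa using hM.add_posSemidef (le_iff.mp hMN)
  set y := N⁻¹ *ᵥ x
  have hy : N *ᵥ y = x := by
    rw [mulVec_mulVec, mul_nonsing_inv _ ((isUnit_iff_isUnit_det N).mp hN.isUnit), one_mulVec]
  have hMy : y ⬝ᵥ M *ᵥ y ≤ y ⬝ᵥ N *ᵥ y := by
    simpa [sub_mulVec] using (le_iff.mp hMN).dotProduct_mulVec_nonneg y
  have hsq := hM.two_mul_dotProduct_sub_le x y
  rw [hy] at hMy
  linarith [dotProduct_comm x y]

end Matrix

section RegularizedScatter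

variable {ι m : Type*} [Fintype m] [DecidableEq m]

noncomputable def regScatter (V : Matrix ι m ℝ) (η : ℝ) (S : Finset ι) : Matrix m m ℝ :=
  1 + η • ∑ i ∈ S, vecMulVec (V i) (V i)

variable (V : Matrix ι m ℝ) {η : ℝ}

theorem regScatter_posDef (hη : 0 ≤ η) (S : Finset ι) : (regScatter V η S).PosDef := by
  refine PosDef.one.add_posSemidef (PosSemidef.smul ?_ hη)
  exact posSemidef_sum S fun i _ => by simpa using posSemidef_vecMulVec_self_star (V i)

theorem regScatter_mono (hη : 0 ≤ η) : Monotone (regScatter V η) := by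
  classical
  intro A B hAB
  rw [le_iff, regScatter, regScatter, ← sum_sdiff hAB, smul_add, add_sub_add_left_eq_sub,
    add_sub_cancel_right]
  refine PosSemidef.smul ?_ hη
  exact posSemidef_sum _ fun i _ => by simpa using posSemidef_vecMulVec_self_star (V i)

theorem det_regScatter_insert [DecidableEq ι] (hη : 0 ≤ η) {S : Finset ι} {e : ι} (he : e ∉ S) :
    (regScatter V η (insert e S)).det =
      (regScatter V η S).det * (1 + η * (V e ⬝ᵥ (regScatter V η S)⁻¹ *ᵥ V e)) := by
  have hsplit : regScatter V η (insert e S) = regScatter V η S + vecMulVec (η • V e) (V e) := by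
    rw [regScatter, regScatter, sum_insert he, smul_add, ← smul_vecMulVec]
    abel
  rw [hsplit, det_add_vecMulVec (regScatter_posDef V hη S).det_pos.ne'.isUnit, mulVec_smul,
    dotProduct_smul, smul_eq_mul]

theorem one_le_one_add_mul_dotProduct_inv_regScatter_mulVec (hη : 0 ≤ η) (S : Finset ι)
    (x : m → ℝ) : 1 ≤ 1 + η * (x ⬝ᵥ (regScatter V η S)⁻¹ *ᵥ x) := by
  have hq := (regScatter_posDef V hη S).inv.posSemidef.dotProduct_mulVec_nonneg x
  rw [star_trivial] at hq
  nlinarith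

theorem log_det_regScatter_insert_sub [DecidableEq ι] (hη : 0 ≤ η) {S : Finset ι} {e : ι}
    (he : e ∉ S) :
    Real.log (regScatter V η (insert e S)).det - Real.log (regScatter V η S).det =
      Real.log (1 + η * (V e ⬝ᵥ (regScatter V η S)⁻¹ *ᵥ V e)) := by
  have hpos := one_le_one_add_mul_dotProduct_inv_regScatter_mulVec V hη S (V e)
  rw [det_regScatter_insert V hη he,
    Real.log_mul (regScatter_posDef V hη S).det_pos.ne' (by positivity), add_sub_cancel_left]

theorem monotone_log_det_regScatter (hη : 0 ≤ η) :
    Monotone fun S => Real.log (regScatter V η S).det := by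
  classical
  refine Finset.monotone_iff_forall_le_insert.mpr fun S e he => ?_
  have hgain := log_det_regScatter_insert_sub V hη he
  have hgain_nonneg :=
    Real.log_nonneg (one_le_one_add_mul_dotProduct_inv_regScatter_mulVec V hη S (V e))
  linarith

theorem log_det_regScatter_insert_sub_le [DecidableEq ι] (hη : 0 ≤ η) {A B : Finset ι}
    (hAB : A ⊆ B) {e : ι} (he : e ∉ B) :
    Real.log (regScatter V η (insert e B)).det - Real.log (regScatter V η B).det ≤
      Real.log (regScatter V η (insert e A)).det - Real.log (regScatter V η A).det := by
  rw [log_det_regScatter_insert_sub V hη he,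
    log_det_regScatter_insert_sub V hη (notMem_mono hAB he)]
  have hB := one_le_one_add_mul_dotProduct_inv_regScatter_mulVec V hη B (V e)
  refine Real.log_le_log (by positivity) ?_
  gcongr
  exact (regScatter_posDef V hη A).dotProduct_inv_mulVec_le_of_le (regScatter_mono V hη hAB) _

theorem Dlog_eq_log_det_regScatter {n : ℕ} {K : Matrix (Fin n) (Fin n) ℝ}
    {V : Matrix (Fin n) m ℝ} (hK : K = V * Vᵀ) (η : ℝ) (S : Finset (Fin n)) :
    Dlog K η S = Real.log (regScatter V η S).det := by
  set W : Matrix S m ℝ := V.submatrix (↑) id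
  have hKS : prinSub K S = W * Wᵀ := by
    rw [prinSub, hK, submatrix_mul _ _ _ id _ Function.bijective_id]
    rfl
  have hWW : Wᵀ * W = ∑ i ∈ S, vecMulVec (V i) (V i) := by
    ext a b
    simp only [W, mul_apply, Matrix.sum_apply, vecMulVec_apply, transpose_apply, submatrix_apply,
      id]
    exact sum_coe_sort S fun i => V i a * V i b
  rw [Dlog, regScatter, hKS, ← Matrix.smul_mul, det_one_add_mul_comm, Matrix.mul_smul, hWW]

end RegularizedScatter

/-- for positive semidefinite `K` and `η > 0`, the log-determinant
diversity is monotone and submodular. -/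
theorem Dlog_monotone_submodular {n : ℕ} (K : Matrix (Fin n) (Fin n) ℝ)
    (hK : K.PosSemidef) (η : ℝ) (hη : 0 < η) :
    (∀ A B : Finset (Fin n), A ⊆ B → Dlog K η A ≤ Dlog K η B) ∧
    (∀ A B : Finset (Fin n), A ⊆ B → ∀ e : Fin n, e ∉ B →
      Dlog K η (insert e A) - Dlog K η A ≥
        Dlog K η (insert e B) - Dlog K η B) := by
  obtain ⟨V, hV⟩ : ∃ V : Matrix (Fin n) (Fin n) ℝ, K = V * Vᵀ := by
    obtain ⟨V, hV⟩ := CStarAlgebra.nonneg_iff_eq_mul_star_self.mp hK.nonneg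
    exact ⟨V, by rwa [star_eq_conjTranspose, conjTranspose_eq_transpose_of_trivial] at hV⟩
  simp only [Dlog_eq_log_det_regScatter hV]
  exact ⟨fun A B hAB => monotone_log_det_regScatter V hη.le hAB,
    fun A B hAB e he => log_det_regScatter_insert_sub_le V hη.le hAB he⟩
end
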